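/- Let 𝒞 be a sequence of m gates on ℝⁿ where each gate is either a Givens rotation on two coordinates or multiplication of one coordinate by a nonzero constant, with composed matrices M₀ = Id, M₁, ..., M_m. Suppose ‖M_i‖·‖M_i⁻¹‖ ≤ R for all i ∈ [m], and M_m = c·F for some c ≠ 0 and F the n×n normalized Walsh–Hadamard matrix (n a power of 2). Then the number of rotation gates in 𝒞 is at least Ω(R⁻¹·n·log n); precisely, there is an absolute constant C > 0 such that the number of rotations is at least n·log₂ n/(C·R). -/

import Mathlib

open Matrix Real

/-- The spectral norm (ℓ²→ℓ² operator norm) of a real matrix. -/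
noncomputable def specNorm {m n : Type*} [Fintype m] [Fintype n] [DecidableEq n]
    (A : Matrix m n ℝ) : ℝ :=
  ‖LinearMap.toContinuousLinearMap (Matrix.toEuclideanLin A)‖

/-- A gate: either a Givens rotation on two coordinates `k < ℓ`, or
multiplication of coordinate `k` by a nonzero constant `c`. -/
inductive Gate (n : ℕ) where
  | rot (k ℓ : Fin n) (hkl : k < ℓ) (θ : ℝ) : Gate n
  | const (k : Fin n) (c : ℝ) (hc : c ≠ 0) : Gate n

/-- The matrix of a gate. -/
noncomputable def Gate.matrix {n : ℕ} : Gate n → Matrix (Fin n) (Fin n) ℝ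
  | .rot k ℓ _ θ => fun i j =>
      if i = k ∧ j = k then cos θ
      else if i = k ∧ j = ℓ then sin θ
      else if i = ℓ ∧ j = k then -sin θ
      else if i = ℓ ∧ j = ℓ then cos θ
      else if i = j then 1 else 0
  | .const k c _ => fun i j => if i = j then (if i = k then c else 1) else 0

/-- Whether a gate is a rotation. -/
def Gate.isRot {n : ℕ} : Gate n → Bool
  | .rot _ _ _ _ => true
  | .const _ _ _ => false

/-- The composed matrix `M_i` of the first `i` gates of a circuit. -/
noncomputable def composed {n m : ℕ} (g : Fin m → Gate n) : ℕ → Matrix (Fin n) (Fin n) ℝ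
  | 0 => 1
  | (i + 1) => if h : i < m then (g ⟨i, h⟩).matrix * composed g i else composed g i

/-- The normalized Walsh–Hadamard matrix of order `n = 2^k`. -/
noncomputable def walshHadamard (k : ℕ) : Matrix (Fin (2 ^ k)) (Fin (2 ^ k)) ℝ :=
  fun i j => (Real.sqrt (2 ^ k))⁻¹ *
    (-1 : ℝ) ^ (∑ t : Fin k, if i.val.testBit t.val && j.val.testBit t.val then 1 else 0 : ℕ)

/-!
Track the quasi-entropy `Φ(M) = ∑ᵢⱼ η(Mᵢⱼ (M⁻¹)ⱼᵢ)`, `η(x) = -x log |x|`, along the circuit.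
It vanishes at `Id` and equals `n log n` at `c • F`, all of whose quasi-probabilities
`Mᵢⱼ (M⁻¹)ⱼᵢ` are `1/n`. A gate acting on a set `S` of coordinates changes only the rows `S`
of the quasi-probabilities and keeps their column sums over `S`. For `S = {k}` this leaves `Φ`
unchanged; for a rotation (`|S| = 2`), near-additivity of `η` together with
`∑ⱼ |Mᵢⱼ (M⁻¹)ⱼᵢ| ≤ ‖M‖ ‖M⁻¹‖` bounds the change of `Φ` by `6 (κ(Mᵢ₊₁) + κ(Mᵢ)) ≤ 12 R`.
Hence `12 R · #rotations ≥ n ln n`.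
-/

open Finset
open scoped Matrix.Norms.L2Operator

namespace Real

lemma abs_negMulLog_le_one {x : ℝ} (hx : |x| ≤ 1) : |negMulLog x| ≤ 1 := by
  have h01 {y : ℝ} (h0 : 0 ≤ y) (h1 : y ≤ 1) : |negMulLog y| ≤ 1 := by
    rw [abs_of_nonneg (negMulLog_nonneg h0 h1)]
    linarith [negMulLog_le_one_sub_self h0]
  rcases le_total 0 x with h | h
  · exact h01 h ((le_abs_self x).trans hx)
  · have hodd : negMulLog x = -negMulLog (-x) := by simp [negMulLog, log_neg_eq_log]
    rw [hodd, abs_neg]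
    exact h01 (neg_nonneg.2 h) ((neg_le_abs x).trans hx)

lemma abs_sum_negMulLog_sub_negMulLog_sum_le {ι : Type*} (s : Finset ι) (p : ι → ℝ) :
    |∑ i ∈ s, negMulLog (p i) - negMulLog (∑ i ∈ s, p i)| ≤ (#s + 1) * ∑ i ∈ s, |p i| := by
  set r := ∑ i ∈ s, |p i|
  rcases (sum_nonneg fun i _ => abs_nonneg (p i) : 0 ≤ r).eq_or_lt with hr | hr
  · have hp : ∀ i ∈ s, p i = 0 := fun i hi =>
      abs_eq_zero.1 ((sum_eq_zero_iff_of_nonneg fun j _ => abs_nonneg (p j)).1 hr.symm i hi)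
    rw [show r = 0 from hr.symm, mul_zero, sum_eq_zero hp,
      sum_eq_zero fun i hi => by rw [hp i hi, negMulLog_zero]]
    simp
  -- `negMulLog (r * a) = a * negMulLog r + r * negMulLog a` reduces to the case `r = 1`.
  have hscale (x : ℝ) : negMulLog x = x / r * negMulLog r + r * negMulLog (x / r) := by
    rw [← negMulLog_mul, mul_div_cancel₀ x hr.ne']
  have hsplit : ∑ i ∈ s, negMulLog (p i) - negMulLog (∑ i ∈ s, p i)
      = r * (∑ i ∈ s, negMulLog (p i / r) - negMulLog ((∑ i ∈ s, p i) / r)) := by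
    rw [sum_congr rfl fun i _ => hscale (p i), hscale (∑ i ∈ s, p i), sum_add_distrib,
      ← sum_mul, ← sum_div, ← mul_sum]
    ring
  have hterm : ∀ i ∈ s, |negMulLog (p i / r)| ≤ 1 := fun i hi => by
    refine abs_negMulLog_le_one ?_
    rw [abs_div, abs_of_pos hr, div_le_one hr]
    exact single_le_sum (fun j _ => abs_nonneg (p j)) hi
  have htotal : |negMulLog ((∑ i ∈ s, p i) / r)| ≤ 1 := by
    refine abs_negMulLog_le_one ?_
    rw [abs_div, abs_of_pos hr, div_le_one hr]
    exact abs_sum_le_sum_abs p s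
  rw [hsplit, abs_mul, abs_of_pos hr, mul_comm]
  gcongr
  calc |∑ i ∈ s, negMulLog (p i / r) - negMulLog ((∑ i ∈ s, p i) / r)|
      ≤ ∑ i ∈ s, |negMulLog (p i / r)| + |negMulLog ((∑ i ∈ s, p i) / r)| :=
        (abs_sub _ _).trans (add_le_add (abs_sum_le_sum_abs _ _) le_rfl)
    _ ≤ #s + 1 := by
        gcongr
        simpa using sum_le_sum hterm

lemma abs_sum_negMulLog_sub_sum_negMulLog_le {ι : Type*} (s : Finset ι) (p q : ι → ℝ)
    (hpq : ∑ i ∈ s, p i = ∑ i ∈ s, q i) :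
    |∑ i ∈ s, negMulLog (p i) - ∑ i ∈ s, negMulLog (q i)|
      ≤ (#s + 1) * (∑ i ∈ s, |p i| + ∑ i ∈ s, |q i|) := by
  have hp := abs_sum_negMulLog_sub_negMulLog_sum_le s p
  have hq := abs_sum_negMulLog_sub_negMulLog_sum_le s q
  rw [hpq] at hp
  have htri := abs_sub_le (∑ i ∈ s, negMulLog (p i)) (negMulLog (∑ i ∈ s, q i))
    (∑ i ∈ s, negMulLog (q i))
  rw [abs_sub_comm (negMulLog _)] at htri
  linarith

end Real

section SpecNorm

variable {m n : Type*} [Fintype m] [Fintype n] [DecidableEq n]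

lemma specNorm_eq_l2_opNorm (A : Matrix m n ℝ) : specNorm A = ‖A‖ := rfl

lemma abs_apply_le_specNorm (A : Matrix m n ℝ) (i : m) (j : n) : |A i j| ≤ specNorm A := by
  calc |A i j| = ‖((EuclideanSpace.equiv m ℝ).symm (A *ᵥ EuclideanSpace.single j 1)).ofLp i‖ := by
        simp [mulVec_single]
    _ ≤ ‖(EuclideanSpace.equiv m ℝ).symm (A *ᵥ EuclideanSpace.single j 1)‖ :=
        PiLp.norm_apply_le _ _
    _ ≤ ‖A‖ * ‖EuclideanSpace.single j (1 : ℝ)‖ := Matrix.l2_opNorm_mulVec _ _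
    _ = specNorm A := by simp [specNorm_eq_l2_opNorm]

lemma sum_abs_mul_apply_le_specNorm_mul [DecidableEq m] (A : Matrix m n ℝ) (B : Matrix n m ℝ)
    (i : m) : ∑ j, |A i j * B j i| ≤ specNorm A * specNorm B := by
  set s : n → ℝ := fun j => SignType.sign (A i j * B j i)
  have hs : ‖s‖ ≤ 1 := (pi_norm_le_iff_of_nonneg zero_le_one).2 fun j => by
    rcases lt_trichotomy (A i j * B j i) 0 with h | h | h <;> simp [s, h]
  calc ∑ j, |A i j * B j i| = (A * Matrix.diagonal s * B) i i := by
        rw [Matrix.mul_apply]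
        exact sum_congr rfl fun j _ => by rw [Matrix.mul_diagonal, ← self_mul_sign]; ring
    _ ≤ specNorm (A * Matrix.diagonal s * B) :=
        (le_abs_self _).trans (abs_apply_le_specNorm _ i i)
    _ ≤ specNorm A * ‖s‖ * specNorm B := by
        simp only [specNorm_eq_l2_opNorm, ← Matrix.l2_opNorm_diagonal]
        exact (Matrix.l2_opNorm_mul _ _).trans (by gcongr; exact Matrix.l2_opNorm_mul _ _)
    _ ≤ specNorm A * specNorm B := by
        rw [mul_assoc]
        exact mul_le_mul_of_nonneg_left (mul_le_of_le_one_left (norm_nonneg B) hs) (norm_nonneg A)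

end SpecNorm

section IdentityOff

variable {ι R : Type*} [Fintype ι] [DecidableEq ι] [CommRing R]

def Matrix.IsIdentityOff (G : Matrix ι ι R) (S : Finset ι) : Prop :=
  ∀ i ∉ S, ∀ a, G i a = (1 : Matrix ι ι R) i a ∧ G a i = (1 : Matrix ι ι R) a i

namespace Matrix.IsIdentityOff

variable {G : Matrix ι ι R} {S : Finset ι}

lemma mul_left_apply_of_notMem (hG : G.IsIdentityOff S) (M : Matrix ι ι R) {i : ι} (hi : i ∉ S)
    (j : ι) : (G * M) i j = M i j := by
  simp only [mul_apply, (hG i hi _).1, one_apply, ite_mul, one_mul, zero_mul, sum_ite_eq,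
    mem_univ, if_true]

lemma mul_right_apply_of_notMem (hG : G.IsIdentityOff S) (M : Matrix ι ι R) (j : ι) {i : ι}
    (hi : i ∉ S) : (M * G) j i = M j i := by
  simp only [mul_apply, (hG i hi _).2, one_apply, mul_ite, mul_one, mul_zero, sum_ite_eq',
    mem_univ, if_true]

lemma inv (hG : G.IsIdentityOff S) (hdet : IsUnit G.det) : G⁻¹.IsIdentityOff S := fun i hi a =>
  ⟨by rw [← hG.mul_left_apply_of_notMem G⁻¹ hi a, mul_nonsing_inv G hdet],
   by rw [← hG.mul_right_apply_of_notMem G⁻¹ a hi, nonsing_inv_mul G hdet]⟩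

end Matrix.IsIdentityOff

end IdentityOff

noncomputable section QuasiEntropy

variable {ι : Type*} [Fintype ι] [DecidableEq ι]

def quasiProb (M : Matrix ι ι ℝ) (i j : ι) : ℝ := M i j * M⁻¹ j i

/-- Natural-log version of `Φ`: `negMulLog x = -x log |x|` because `Real.log` is even. -/
def quasiEntropy (M : Matrix ι ι ℝ) : ℝ := ∑ i, ∑ j, negMulLog (quasiProb M i j)

def condNumber (M : Matrix ι ι ℝ) : ℝ := specNorm M * specNorm M⁻¹

lemma quasiEntropy_one : quasiEntropy (1 : Matrix ι ι ℝ) = 0 := by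
  refine sum_eq_zero fun i _ => sum_eq_zero fun j _ => ?_
  rcases eq_or_ne i j with rfl | h <;> simp [quasiProb, *]

lemma sum_abs_quasiProb_le_condNumber (M : Matrix ι ι ℝ) (i : ι) :
    ∑ j, |quasiProb M i j| ≤ condNumber M :=
  sum_abs_mul_apply_le_specNorm_mul M M⁻¹ i

lemma sum_quasiProb_eq (M : Matrix ι ι ℝ) (j : ι) : ∑ i, quasiProb M i j = (M⁻¹ * M) j j := by
  simp only [quasiProb, Matrix.mul_apply, mul_comm]

namespace Matrix.IsIdentityOff

variable {G : Matrix ι ι ℝ} {S : Finset ι}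

lemma quasiProb_mul_of_notMem (hG : G.IsIdentityOff S) (hdet : IsUnit G.det)
    (M : Matrix ι ι ℝ) {i : ι} (hi : i ∉ S) (j : ι) :
    quasiProb (G * M) i j = quasiProb M i j := by
  rw [quasiProb, quasiProb, Matrix.mul_inv_rev, hG.mul_left_apply_of_notMem M hi,
    (hG.inv hdet).mul_right_apply_of_notMem _ _ hi]

-- The column sums over all rows are entries of `M⁻¹ * M`, which `G` does not change.
lemma sum_quasiProb_mul (hG : G.IsIdentityOff S) (hdet : IsUnit G.det) (M : Matrix ι ι ℝ)
    (j : ι) : ∑ i ∈ S, quasiProb (G * M) i j = ∑ i ∈ S, quasiProb M i j := by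
  have htotal : ∑ i, quasiProb (G * M) i j = ∑ i, quasiProb M i j := by
    rw [sum_quasiProb_eq, sum_quasiProb_eq, Matrix.mul_inv_rev, Matrix.mul_assoc,
      ← Matrix.mul_assoc G⁻¹, Matrix.nonsing_inv_mul G hdet, Matrix.one_mul]
  rw [← sum_add_sum_compl S, ← sum_add_sum_compl S (quasiProb M · j),
    sum_congr rfl fun i hi => hG.quasiProb_mul_of_notMem hdet M (mem_compl.1 hi) j] at htotal
  exact add_right_cancel htotal

lemma quasiEntropy_mul_sub (hG : G.IsIdentityOff S) (hdet : IsUnit G.det) (M : Matrix ι ι ℝ) :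
    quasiEntropy (G * M) - quasiEntropy M = ∑ j, (∑ i ∈ S, negMulLog (quasiProb (G * M) i j)
      - ∑ i ∈ S, negMulLog (quasiProb M i j)) := by
  have hcompl : ∑ i ∈ Sᶜ, ∑ j, negMulLog (quasiProb (G * M) i j)
      = ∑ i ∈ Sᶜ, ∑ j, negMulLog (quasiProb M i j) :=
    sum_congr rfl fun i hi => sum_congr rfl fun j _ => by
      rw [hG.quasiProb_mul_of_notMem hdet M (mem_compl.1 hi)]
  rw [quasiEntropy, quasiEntropy, ← sum_add_sum_compl S,
    ← sum_add_sum_compl S (fun i => ∑ j, negMulLog (quasiProb M i j)), hcompl,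
    add_sub_add_right_eq_sub, sum_comm, sum_comm (s := S) (t := univ), ← sum_sub_distrib]

lemma quasiEntropy_mul_of_singleton {k : ι} (hG : G.IsIdentityOff {k}) (hdet : IsUnit G.det)
    (M : Matrix ι ι ℝ) : quasiEntropy (G * M) = quasiEntropy M := by
  have hsum := hG.sum_quasiProb_mul hdet M
  simp only [sum_singleton] at hsum
  have hdiff := hG.quasiEntropy_mul_sub hdet M
  simp only [sum_singleton, hsum, sub_self, sum_const_zero] at hdiff
  exact sub_eq_zero.1 hdiff

lemma abs_quasiEntropy_mul_sub_le (hG : G.IsIdentityOff S) (hdet : IsUnit G.det)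
    (M : Matrix ι ι ℝ) : |quasiEntropy (G * M) - quasiEntropy M|
      ≤ (#S + 1) * #S * (condNumber (G * M) + condNumber M) := by
  rw [hG.quasiEntropy_mul_sub hdet M]
  calc _ ≤ ∑ j, (#S + 1) * (∑ i ∈ S, |quasiProb (G * M) i j| + ∑ i ∈ S, |quasiProb M i j|) :=
        (abs_sum_le_sum_abs _ _).trans <| sum_le_sum fun j _ =>
          Real.abs_sum_negMulLog_sub_sum_negMulLog_le S _ _ (hG.sum_quasiProb_mul hdet M j)
    _ = (#S + 1) * ∑ i ∈ S, (∑ j, |quasiProb (G * M) i j| + ∑ j, |quasiProb M i j|) := by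
        simp only [← mul_sum, sum_add_distrib]
        congr 2 <;> exact sum_comm
    _ ≤ (#S + 1) * ∑ i ∈ S, (condNumber (G * M) + condNumber M) := by
        gcongr with i
        · exact sum_abs_quasiProb_le_condNumber _ i
        · exact sum_abs_quasiProb_le_condNumber _ i
    _ = _ := by rw [sum_const, nsmul_eq_mul]; ring

end Matrix.IsIdentityOff

end QuasiEntropy

namespace Gate

variable {n : ℕ}

lemma isIdentityOff_rot (k ℓ : Fin n) (hkl : k < ℓ) (θ : ℝ) :
    (rot k ℓ hkl θ).matrix.IsIdentityOff {k, ℓ} := fun i hi a => by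
  simp only [mem_insert, mem_singleton, not_or] at hi
  simp [Gate.matrix, one_apply, hi.1, hi.2, eq_comm]

lemma isIdentityOff_const (k : Fin n) (c : ℝ) (hc : c ≠ 0) :
    (const k c hc).matrix.IsIdentityOff {k} := fun i hi a => by
  rw [mem_singleton] at hi
  rcases eq_or_ne i a with rfl | h
  · simp [Gate.matrix, hi]
  · simp [Gate.matrix, one_apply, h, Ne.symm h]

lemma rot_matrix_mul_transpose (k ℓ : Fin n) (hkl : k < ℓ) (θ : ℝ) :
    (rot k ℓ hkl θ).matrix * (rot k ℓ hkl θ).matrixᵀ = 1 := by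
  have hG := isIdentityOff_rot k ℓ hkl θ
  have hGt : (rot k ℓ hkl θ).matrixᵀ.IsIdentityOff {k, ℓ} := fun i hi a => by
    simpa [one_apply, eq_comm, and_comm] using hG i hi a
  ext i j
  by_cases hi : i ∈ ({k, ℓ} : Finset (Fin n))
  · by_cases hj : j ∈ ({k, ℓ} : Finset (Fin n))
    · rw [mul_apply, Fintype.sum_eq_add k ℓ hkl.ne fun a ha => by
        simp only [mem_insert, mem_singleton] at hi
        rcases hi with rfl | rfl <;> simp [Gate.matrix, ha.1, ha.2, Ne.symm ha.1, Ne.symm ha.2]]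
      simp only [mem_insert, mem_singleton] at hi hj
      rcases hi with rfl | rfl <;> rcases hj with rfl | rfl <;>
        simp only [transpose_apply] <;> simp [Gate.matrix, hkl.ne, hkl.ne'] <;>
        nlinarith [sin_sq_add_cos_sq θ]
    · rw [hGt.mul_right_apply_of_notMem _ _ hj, (hG j hj i).2]
  · rw [hG.mul_left_apply_of_notMem _ hi, transpose_apply, (hG i hi j).2]
    simp [one_apply, eq_comm]

lemma isUnit_det_matrix : ∀ G : Gate n, IsUnit G.matrix.det
  | rot k ℓ hkl θ => isUnit_det_of_right_inverse (rot_matrix_mul_transpose k ℓ hkl θ)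
  | const k c hc => by
    change IsUnit (diagonal fun i => if i = k then c else 1).det
    rw [det_diagonal, isUnit_iff_ne_zero, prod_ne_zero_iff]
    intro i _
    split_ifs <;> simp [hc]

lemma abs_quasiEntropy_mul_sub_le : ∀ (G : Gate n) (M : Matrix (Fin n) (Fin n) ℝ),
    |quasiEntropy (G.matrix * M) - quasiEntropy M|
      ≤ if G.isRot then 6 * (condNumber (G.matrix * M) + condNumber M) else 0
  | rot k ℓ hkl θ, M => by
    have h := (isIdentityOff_rot k ℓ hkl θ).abs_quasiEntropy_mul_sub_le (isUnit_det_matrix _) M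
    rw [card_pair hkl.ne] at h
    norm_num [isRot] at h ⊢
    exact h
  | const k c hc, M => by
    rw [(isIdentityOff_const k c hc).quasiEntropy_mul_of_singleton (isUnit_det_matrix _) M]
    simp [isRot]

end Gate

lemma composed_succ {n m : ℕ} (g : Fin m → Gate n) (t : Fin m) :
    composed g (t + 1) = (g t).matrix * composed g t := by
  simp [composed]

lemma abs_quasiEntropy_composed_le {n m : ℕ} (g : Fin m → Gate n) {R : ℝ}
    (hR : ∀ i ≤ m, condNumber (composed g i) ≤ R) :
    |quasiEntropy (composed g m)| ≤ 12 * R * #{t | (g t).isRot} := by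
  have hstep (t : Fin m) : |quasiEntropy (composed g (t + 1)) - quasiEntropy (composed g t)|
      ≤ 12 * R * if (g t).isRot then 1 else 0 := by
    have h := (g t).abs_quasiEntropy_mul_sub_le (composed g t)
    rw [← composed_succ] at h
    split_ifs at h ⊢
    · linarith [hR (t + 1) t.2, hR t t.2.le]
    · simpa using h
  calc |quasiEntropy (composed g m)|
      = |∑ t : Fin m, (quasiEntropy (composed g (t + 1)) - quasiEntropy (composed g t))| := by
        rw [Fin.sum_univ_eq_sum_range (fun t => quasiEntropy (composed g (t + 1))
          - quasiEntropy (composed g t)), sum_range_sub (fun t => quasiEntropy (composed g t))]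
        simp [composed, quasiEntropy_one]
    _ ≤ ∑ t : Fin m, 12 * R * if (g t).isRot then 1 else 0 :=
        (abs_sum_le_sum_abs _ _).trans (sum_le_sum fun t _ => hstep t)
    _ = 12 * R * #{t | (g t).isRot} := by rw [← mul_sum, sum_boole]

section WalshHadamard

def binaryDigits (k : ℕ) : Fin (2 ^ k) ≃ (Fin k → Bool) :=
  finFunctionFinEquiv.symm.trans (Equiv.arrowCongr (Equiv.refl _) finTwoEquiv)

lemma binaryDigits_apply (k : ℕ) (t : Fin (2 ^ k)) (b : Fin k) :
    binaryDigits k t b = t.val.testBit b := by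
  have hbool : ∀ x : Fin 2, finTwoEquiv x = decide (x.val = 1) := by decide
  simp [binaryDigits, hbool, Nat.testBit_eq_decide_div_mod_eq]

def bitSign (a b : Bool) : ℝ := if a && b then -1 else 1

lemma sum_bitSign_mul_bitSign (a a' : Bool) :
    ∑ c, bitSign a c * bitSign c a' = if a = a' then 2 else 0 := by
  cases a <;> cases a' <;> norm_num [bitSign]

lemma walshHadamard_apply (k : ℕ) (i j : Fin (2 ^ k)) : walshHadamard k i j =
    (√(2 ^ k))⁻¹ * ∏ b, bitSign (binaryDigits k i b) (binaryDigits k j b) := by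
  rw [walshHadamard, ← prod_pow_eq_pow_sum]
  congr 1
  refine prod_congr rfl fun b _ => ?_
  rw [binaryDigits_apply, binaryDigits_apply, bitSign]
  split_ifs <;> simp

lemma walshHadamard_mul_self (k : ℕ) : walshHadamard k * walshHadamard k = 1 := by
  ext i j
  have hnorm : (√(2 ^ k : ℝ))⁻¹ * (√(2 ^ k))⁻¹ = (2 ^ k)⁻¹ := by
    rw [← mul_inv, Real.mul_self_sqrt (by positivity)]
  -- Summing over the digits of the middle index factors the sum bit by bit.
  have hsum : ∑ t, ∏ b, bitSign (binaryDigits k i b) (binaryDigits k t b)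
      * bitSign (binaryDigits k t b) (binaryDigits k j b) = if i = j then 2 ^ k else 0 := by
    rw [(binaryDigits k).sum_comp (fun x => ∏ b, bitSign (binaryDigits k i b) (x b)
        * bitSign (x b) (binaryDigits k j b)),
      ← Fintype.prod_sum fun b c => bitSign (binaryDigits k i b) c
        * bitSign c (binaryDigits k j b)]
    simp only [sum_bitSign_mul_bitSign, Fintype.prod_ite_zero, prod_const, card_univ,
      Fintype.card_fin, ← funext_iff, (binaryDigits k).injective.eq_iff]
  calc (walshHadamard k * walshHadamard k) i j
      = (√(2 ^ k : ℝ))⁻¹ * (√(2 ^ k))⁻¹ * ∑ t, ∏ b, bitSign (binaryDigits k i b)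
          (binaryDigits k t b) * bitSign (binaryDigits k t b) (binaryDigits k j b) := by
        simp only [mul_apply, walshHadamard_apply, mul_sum, prod_mul_distrib]
        exact sum_congr rfl fun t _ => by ring
    _ = (1 : Matrix (Fin (2 ^ k)) (Fin (2 ^ k)) ℝ) i j := by
        rw [hsum, hnorm, one_apply]
        split_ifs <;> simp

lemma walshHadamard_apply_mul_apply (k : ℕ) (i j : Fin (2 ^ k)) :
    walshHadamard k i j * walshHadamard k j i = (2 ^ k)⁻¹ := by
  have hsq : ∀ b, bitSign (binaryDigits k i b) (binaryDigits k j b)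
      * bitSign (binaryDigits k j b) (binaryDigits k i b) = 1 := fun b => by
    unfold bitSign
    split_ifs <;> simp_all [Bool.and_comm]
  rw [walshHadamard_apply, walshHadamard_apply, mul_mul_mul_comm, ← prod_mul_distrib,
    prod_congr rfl fun b _ => hsq b, prod_const_one, mul_one, ← mul_inv,
    Real.mul_self_sqrt (by positivity)]

lemma quasiEntropy_smul_walshHadamard (k : ℕ) {c : ℝ} (hc : c ≠ 0) :
    quasiEntropy (c • walshHadamard k) = 2 ^ k * Real.log (2 ^ k) := by
  have hinv : (c • walshHadamard k)⁻¹ = c⁻¹ • walshHadamard k :=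
    inv_eq_right_inv (by rw [smul_mul_smul, mul_inv_cancel₀ hc, walshHadamard_mul_self, one_smul])
  have hprob (i j) : quasiProb (c • walshHadamard k) i j = (2 ^ k)⁻¹ := by
    rw [quasiProb, hinv, Matrix.smul_apply, Matrix.smul_apply, smul_eq_mul, smul_eq_mul, mul_mul_mul_comm,
      mul_inv_cancel₀ hc, one_mul, walshHadamard_apply_mul_apply]
  simp only [quasiEntropy, hprob, sum_const, card_univ, Fintype.card_fin, nsmul_eq_mul,
    Real.negMulLog, Real.log_inv]
  push_cast
  field_simp

end WalshHadamard

/-- Any `R`-uniformly well conditioned circuit of rotation and constant gates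
computing a nonzero multiple of the Walsh–Hadamard transform of order `n = 2^k`
must contain at least `n·log₂ n / (C·R)` rotation gates, `C` an absolute constant. -/
theorem stmt18 :
    ∃ C : ℝ, 0 < C ∧
      ∀ (k m : ℕ) (g : Fin m → Gate (2 ^ k)) (R c : ℝ), 1 ≤ R → c ≠ 0 →
        (∀ i ≤ m, specNorm (composed g i) * specNorm (composed g i)⁻¹ ≤ R) →
        composed g m = c • walshHadamard k →
        ((2 ^ k : ℝ) * logb 2 (2 ^ k : ℝ)) / (C * R) ≤
          ((Finset.univ.filter fun i : Fin m => (g i).isRot = true).card : ℝ) := by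
  have hlog2 : 0 < Real.log 2 := Real.log_pos one_lt_two
  refine ⟨12 / Real.log 2, by positivity, fun k m g R c hR hc hcond hM => ?_⟩
  have hbound := abs_quasiEntropy_composed_le g hcond
  have hentropy : 0 ≤ (2 : ℝ) ^ k * Real.log (2 ^ k) :=
    mul_nonneg (by positivity) (Real.log_nonneg (one_le_pow₀ one_le_two))
  rw [hM, quasiEntropy_smul_walshHadamard k hc, abs_of_nonneg hentropy] at hbound
  have hlhs : (2 ^ k : ℝ) * logb 2 (2 ^ k) / (12 / Real.log 2 * R)
      = 2 ^ k * Real.log (2 ^ k) / (12 * R) := by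
    rw [Real.logb]
    field_simp
  rw [hlhs]
  exact div_le_of_le_mul₀ (by positivity) (Nat.cast_nonneg _) (by linarith)
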